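/- Let 1<p<∞ and let u and w be scalar A_p weights on ℝ^d. Set ν = (u w^{-1})^{1/p}. Then for every cube I, the average m_I ν is comparable (with constants depending only on the A_p characteristics of u and w, p and d) to each of the quantities (m_I u)^{1/p}(m_I w^{1−p'})^{1/p'} when raised appropriately, (m_I u)^{1/p}(m_I w)^{−1/p}, and (m_I u^{1/p})(m_I w^{1/p})^{−1}. In particular, a locally integrable b belongs to BMO_ν if and only if sup over cubes I of (1/|I|)∫_I (m_I w^{1/p})(m_I u^{1/p})^{−1} |b(x) − m_I b| dx < ∞. -/

import Mathlib

open MeasureTheory Matrix Filter Set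
open scoped ENNReal NNReal ComplexOrder

namespace MW

/-- An axis-parallel half-open cube in `ℝ^d`. -/
structure Cube (d : ℕ) where
  corner : Fin d → ℝ
  side : ℝ
  side_pos : 0 < side

namespace Cube

/-- The set of points of a cube. -/
def carrier {d : ℕ} (I : Cube d) : Set (Fin d → ℝ) :=
  {x | ∀ i, I.corner i ≤ x i ∧ x i < I.corner i + I.side}

/-- The volume `|I|` of a cube. -/
noncomputable def vol {d : ℕ} (I : Cube d) : ℝ := I.side ^ d

end Cube

/-- Euclidean norm of a complex vector. -/
noncomputable def vnorm {n : ℕ} (v : Fin n → ℂ) : ℝ :=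
  Real.sqrt (∑ i, ‖v i‖ ^ 2)

/-- Euclidean distance on `ℝ^d` (as `Fin d → ℝ`). -/
noncomputable def edist2 {d : ℕ} (x y : Fin d → ℝ) : ℝ :=
  Real.sqrt (∑ i, (x i - y i) ^ 2)

/-- Operator norm of an `n × n` complex matrix (with respect to Euclidean norms). -/
noncomputable def mnorm {n : ℕ} (M : Matrix (Fin n) (Fin n) ℂ) : ℝ :=
  ⨆ v : {v : Fin n → ℂ // vnorm v ≤ 1}, vnorm (M.mulVec v.1)

/-- Frobenius norm of a matrix. -/
noncomputable def fnorm {n : ℕ} (M : Matrix (Fin n) (Fin n) ℂ) : ℝ :=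
  Real.sqrt (∑ i, ∑ j, ‖M i j‖ ^ 2)

/-- Real power of a Hermitian matrix, via the spectral theorem (junk value `0` on
non-Hermitian matrices).  For a positive definite matrix `A` and `r : ℝ` this is the
usual power `A^r`. -/
noncomputable def mpow {n : ℕ} (A : Matrix (Fin n) (Fin n) ℂ) (r : ℝ) :
    Matrix (Fin n) (Fin n) ℂ :=
  if hA : A.IsHermitian then
    (hA.eigenvectorUnitary : Matrix (Fin n) (Fin n) ℂ) *
      Matrix.diagonal (fun i => ((hA.eigenvalues i ^ r : ℝ) : ℂ)) *
      star (hA.eigenvectorUnitary : Matrix (Fin n) (Fin n) ℂ)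
  else 0

/-- Conjugate exponent `p' = p/(p-1)`. -/
noncomputable def conjExp (p : ℝ) : ℝ := p / (p - 1)

/-- Entrywise average `m_I B` of a matrix-valued function over a cube. -/
noncomputable def avgM {d n : ℕ} (I : Cube d) (B : (Fin d → ℝ) → Matrix (Fin n) (Fin n) ℂ) :
    Matrix (Fin n) (Fin n) ℂ :=
  Matrix.of fun i j => (I.vol)⁻¹ • ∫ x in I.carrier, B x i j

/-- Entrywise average `m_I f` of a vector-valued function over a cube. -/
noncomputable def avgV {d n : ℕ} (I : Cube d) (f : (Fin d → ℝ) → Fin n → ℂ) : Fin n → ℂ :=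
  fun i => (I.vol)⁻¹ • ∫ x in I.carrier, f x i

/-- Average of a real-valued function over a cube. -/
noncomputable def savg {d : ℕ} (I : Cube d) (g : (Fin d → ℝ) → ℝ) : ℝ :=
  (I.vol)⁻¹ * ∫ x in I.carrier, g x

/-- Average of a complex-valued function over a cube. -/
noncomputable def cavg {d : ℕ} (I : Cube d) (g : (Fin d → ℝ) → ℂ) : ℂ :=
  (I.vol)⁻¹ • ∫ x in I.carrier, g x

/-- The `A_p` expression of a matrix weight on a cube. -/
noncomputable def apIntegral {d n : ℕ} (p : ℝ) (W : (Fin d → ℝ) → Matrix (Fin n) (Fin n) ℂ)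
    (I : Cube d) : ℝ≥0∞ :=
  (ENNReal.ofReal I.vol)⁻¹ *
    ∫⁻ x in I.carrier,
      ((ENNReal.ofReal I.vol)⁻¹ *
        ∫⁻ t in I.carrier,
          ENNReal.ofReal (mnorm (mpow (W x) (1 / p) * mpow (W t) (-(1 / p))) ^ conjExp p)) ^
        (p / conjExp p)

/-- A matrix `A_p` weight: measurable, a.e. positive definite, with finite `A_p`
characteristic. -/
def IsApWeight {d n : ℕ} (p : ℝ) (W : (Fin d → ℝ) → Matrix (Fin n) (Fin n) ℂ) : Prop :=
  (∀ i j, Measurable fun x => W x i j) ∧ (∀ᵐ x : Fin d → ℝ, (W x).PosDef) ∧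
    ∃ C : ℝ, ∀ I : Cube d, apIntegral p W I ≤ ENNReal.ofReal C

/-- Local integrability of a matrix-valued function (entrywise). -/
def LocIntM {d n : ℕ} (B : (Fin d → ℝ) → Matrix (Fin n) (Fin n) ℂ) : Prop :=
  ∀ i j, LocallyIntegrable (fun x => B x i j) volume

/-- The `L^p` average `((1/|I|)∫_I |W^{1/p}(x) e|^p dx)^{1/p}`. -/
noncomputable def lpAvg {d n : ℕ} (p : ℝ) (W : (Fin d → ℝ) → Matrix (Fin n) (Fin n) ℂ)
    (I : Cube d) (e : Fin n → ℂ) : ℝ≥0∞ :=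
  ((ENNReal.ofReal I.vol)⁻¹ *
    ∫⁻ x in I.carrier, ENNReal.ofReal (vnorm ((mpow (W x) (1 / p)).mulVec e) ^ p)) ^ (1 / p)

/-- The dual `L^{p'}` average `((1/|I|)∫_I |W^{-1/p}(x) e|^{p'} dx)^{1/p'}`. -/
noncomputable def lpAvgDual {d n : ℕ} (p : ℝ) (W : (Fin d → ℝ) → Matrix (Fin n) (Fin n) ℂ)
    (I : Cube d) (e : Fin n → ℂ) : ℝ≥0∞ :=
  ((ENNReal.ofReal I.vol)⁻¹ *
    ∫⁻ x in I.carrier, ENNReal.ofReal (vnorm ((mpow (W x) (-(1 / p))).mulVec e) ^ conjExp p)) ^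
    (1 / conjExp p)

/-- `V` is a family of reducing operators for the weight `W`: positive definite matrices with
`|V_I e| ≈ ((1/|I|)∫_I |W^{1/p} e|^p)^{1/p}`, with constants independent of `I`, `e`. -/
def IsReducing {d n : ℕ} (p : ℝ) (W : (Fin d → ℝ) → Matrix (Fin n) (Fin n) ℂ)
    (V : Cube d → Matrix (Fin n) (Fin n) ℂ) : Prop :=
  (∀ I, (V I).PosDef) ∧
    ∃ c C : ℝ, 0 < c ∧ ∀ (I : Cube d) (e : Fin n → ℂ),
      ENNReal.ofReal (c * vnorm ((V I).mulVec e)) ≤ lpAvg p W I e ∧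
        lpAvg p W I e ≤ ENNReal.ofReal (C * vnorm ((V I).mulVec e))

/-- `V'` is a family of dual reducing operators for the weight `W`:
`|V'_I e| ≈ ((1/|I|)∫_I |W^{-1/p} e|^{p'})^{1/p'}`. -/
def IsDualReducing {d n : ℕ} (p : ℝ) (W : (Fin d → ℝ) → Matrix (Fin n) (Fin n) ℂ)
    (V : Cube d → Matrix (Fin n) (Fin n) ℂ) : Prop :=
  (∀ I, (V I).PosDef) ∧
    ∃ c C : ℝ, 0 < c ∧ ∀ (I : Cube d) (e : Fin n → ℂ),
      ENNReal.ofReal (c * vnorm ((V I).mulVec e)) ≤ lpAvgDual p W I e ∧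
        lpAvgDual p W I e ≤ ENNReal.ofReal (C * vnorm ((V I).mulVec e))

/-- The weighted norm `‖f‖_{L^p(W)}`. -/
noncomputable def lpNormW {d n : ℕ} (p : ℝ) (W : (Fin d → ℝ) → Matrix (Fin n) (Fin n) ℂ)
    (f : (Fin d → ℝ) → Fin n → ℂ) : ℝ≥0∞ :=
  (∫⁻ x, ENNReal.ofReal (vnorm ((mpow (W x) (1 / p)).mulVec (f x)) ^ p)) ^ (1 / p)

/-- The unweighted norm `‖f‖_{L^p(ℝ^d;ℂ^n)}`. -/
noncomputable def plNorm {d n : ℕ} (p : ℝ) (f : (Fin d → ℝ) → Fin n → ℂ) : ℝ≥0∞ :=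
  (∫⁻ x, ENNReal.ofReal (vnorm (f x) ^ p)) ^ (1 / p)

/-- `T` is bounded from `L^p(U)` to `L^p(W)`. -/
def BddW {d n : ℕ} (p : ℝ) (U W : (Fin d → ℝ) → Matrix (Fin n) (Fin n) ℂ)
    (T : ((Fin d → ℝ) → Fin n → ℂ) → (Fin d → ℝ) → Fin n → ℂ) : Prop :=
  ∃ C : ℝ, ∀ f, lpNormW p W (T f) ≤ ENNReal.ofReal C * lpNormW p U f

/-- `T` is bounded on (unweighted) `L^p(ℝ^d;ℂ^n)`. -/
def BddPlain {d n : ℕ} (p : ℝ)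
    (T : ((Fin d → ℝ) → Fin n → ℂ) → (Fin d → ℝ) → Fin n → ℂ) : Prop :=
  ∃ C : ℝ, ∀ f, plNorm p (T f) ≤ ENNReal.ofReal C * plNorm p f

/-- The principal value convolution operator with kernel `K` (scalar valued),
defined as the limit of the truncated singular integrals. -/
noncomputable def czo {d : ℕ} (K : (Fin d → ℝ) → ℝ) (g : (Fin d → ℝ) → ℂ)
    (x : Fin d → ℝ) : ℂ :=
  limUnder (nhdsWithin (0 : ℝ) (Set.Ioi 0)) fun ε : ℝ =>
    ∫ y in {y | ε < edist2 x y}, (K (x - y) : ℂ) * g y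

/-- The `j`-th Riesz transform, as the principal value convolution with the kernel
`x_j / |x|^{d+1}`. -/
noncomputable def riesz {d : ℕ} (j : Fin d) : ((Fin d → ℝ) → ℂ) → (Fin d → ℝ) → ℂ :=
  czo fun z => z j / edist2 z 0 ^ (d + 1)

/-- Apply a scalar operator entrywise to a `ℂ^n`-valued function. -/
noncomputable def entrywise {d n : ℕ} (T : ((Fin d → ℝ) → ℂ) → (Fin d → ℝ) → ℂ)
    (f : (Fin d → ℝ) → Fin n → ℂ) : (Fin d → ℝ) → Fin n → ℂ :=
  fun x i => T (fun y => f y i) x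

/-- The commutator `[T, B] f = T(Bf) - B(Tf)` of a scalar (entrywise) operator with a
matrix symbol. -/
noncomputable def commutator {d n : ℕ} (T : ((Fin d → ℝ) → ℂ) → (Fin d → ℝ) → ℂ)
    (B : (Fin d → ℝ) → Matrix (Fin n) (Fin n) ℂ) (f : (Fin d → ℝ) → Fin n → ℂ) :
    (Fin d → ℝ) → Fin n → ℂ :=
  fun x => entrywise T (fun y => (B y).mulVec (f y)) x - (B x).mulVec (entrywise T f x)

/-- The two matrix weighted space `BMO^p_{W,U}`: for some `ε > 0`,
`sup_I (1/|I|) ∫_I ‖(m_I W^{1/p}) (B(x) - m_I B) (m_I U^{1/p})⁻¹‖^{1+ε} dx < ∞`. -/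
def BMOfull {d n : ℕ} (p : ℝ) (W U B : (Fin d → ℝ) → Matrix (Fin n) (Fin n) ℂ) : Prop :=
  ∃ ε : ℝ, 0 < ε ∧ ∃ C : ℝ, ∀ I : Cube d,
    (∫⁻ x in I.carrier,
      ENNReal.ofReal
        (mnorm (avgM I (fun t => mpow (W t) (1 / p)) * (B x - avgM I B) *
          (avgM I fun t => mpow (U t) (1 / p))⁻¹) ^ (1 + ε))) ≤
      ENNReal.ofReal (C * I.vol)

/-- The dyadic version of `BMO^p_{W,U}` relative to a family `𝒟` of cubes. -/
def BMOfullD {d n : ℕ} (p : ℝ) (𝒟 : Set (Cube d))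
    (W U B : (Fin d → ℝ) → Matrix (Fin n) (Fin n) ℂ) : Prop :=
  ∃ ε : ℝ, 0 < ε ∧ ∃ C : ℝ, ∀ I ∈ 𝒟,
    (∫⁻ x in I.carrier,
      ENNReal.ofReal
        (mnorm (avgM I (fun t => mpow (W t) (1 / p)) * (B x - avgM I B) *
          (avgM I fun t => mpow (U t) (1 / p))⁻¹) ^ (1 + ε))) ≤
      ENNReal.ofReal (C * I.vol)

/-- A dyadic grid: a family of cubes of dyadic side lengths such that each scale is a
partition of `ℝ^d` and any two cubes of the family are nested or disjoint. -/
def IsDyadicGrid {d : ℕ} (𝒟 : Set (Cube d)) : Prop :=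
  (∀ I ∈ 𝒟, ∃ k : ℤ, I.side = (2 : ℝ) ^ (-k)) ∧
    (∀ (k : ℤ) (x : Fin d → ℝ), ∃! I : Cube d,
      I ∈ 𝒟 ∧ I.side = (2 : ℝ) ^ (-k) ∧ x ∈ I.carrier) ∧
    ∀ I ∈ 𝒟, ∀ J ∈ 𝒟,
      I.carrier ⊆ J.carrier ∨ J.carrier ⊆ I.carrier ∨ Disjoint I.carrier J.carrier

/-- The dyadic subcubes `D(J)` of `J` belonging to the family `𝒟`. -/
def dsub {d : ℕ} (𝒟 : Set (Cube d)) (J : Cube d) : Set (Cube d) :=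
  {I | I ∈ 𝒟 ∧ I.carrier ⊆ J.carrier}

/-- The set of cancellative Haar signatures: `ε ∈ {0,1}^d ∖ {(1,…,1)}`, where `true`
codes `1` (the noncancellative factor). -/
def Sig (d : ℕ) : Type := {ε : Fin d → Bool // ∃ i, ε i = false}

/-- One-dimensional noncancellative Haar factor `h^1`. -/
noncomputable def haarOne (a h x : ℝ) : ℝ :=
  if a ≤ x ∧ x < a + h then (Real.sqrt h)⁻¹ else 0

/-- One-dimensional cancellative Haar factor `h^0`. -/
noncomputable def haarZero (a h x : ℝ) : ℝ :=
  if a ≤ x ∧ x < a + h / 2 then (Real.sqrt h)⁻¹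
  else if a + h / 2 ≤ x ∧ x < a + h then -(Real.sqrt h)⁻¹ else 0

/-- The Haar function `h_I^ε` on `ℝ^d`. -/
noncomputable def haar {d : ℕ} (I : Cube d) (ε : Fin d → Bool) (x : Fin d → ℝ) : ℝ :=
  ∏ i, if ε i then haarOne (I.corner i) I.side (x i) else haarZero (I.corner i) I.side (x i)

/-- The matrix of Haar coefficients `B_I^ε = ∫ B h_I^ε`. -/
noncomputable def mHaarCoef {d n : ℕ} (B : (Fin d → ℝ) → Matrix (Fin n) (Fin n) ℂ)
    (I : Cube d) (ε : Fin d → Bool) : Matrix (Fin n) (Fin n) ℂ :=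
  Matrix.of fun i j => ∫ x, (haar I ε x : ℂ) * B x i j

/-- The vector of Haar coefficients `f_I^ε = ∫ f h_I^ε`. -/
noncomputable def vHaarCoef {d n : ℕ} (f : (Fin d → ℝ) → Fin n → ℂ)
    (I : Cube d) (ε : Fin d → Bool) : Fin n → ℂ :=
  fun i => ∫ x, (haar I ε x : ℂ) * f x i

/-- The condition (b) of the Carleson embedding theorem:
`sup_{J∈𝒟} (1/|J|) Σ_{I∈𝒟(J)} Σ_ε ‖V_I(W) A_I^ε V_I(U)⁻¹‖² < ∞`. -/
def BseqCond {d n : ℕ} (𝒟 : Set (Cube d)) (VW VU : Cube d → Matrix (Fin n) (Fin n) ℂ)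
    (A : Cube d → (Fin d → Bool) → Matrix (Fin n) (Fin n) ℂ) : Prop :=
  ∃ C : ℝ, ∀ J ∈ 𝒟,
    (∑' (I : ↥(dsub 𝒟 J)) (ε : Sig d),
      ENNReal.ofReal (mnorm (VW I.1 * A I.1 ε.1 * (VU I.1)⁻¹) ^ 2)) ≤
      ENNReal.ofReal (C * J.vol)

/-- The quantity `(1/|K|) Σ_{I∈𝒟(K)} Σ_ε ‖V_I(W) A_I^ε (V_K(U))⁻¹‖²` (unnormalized sum). -/
noncomputable def boutSum {d n : ℕ} (𝒟 : Set (Cube d))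
    (VW VU : Cube d → Matrix (Fin n) (Fin n) ℂ)
    (A : Cube d → (Fin d → Bool) → Matrix (Fin n) (Fin n) ℂ) (K : Cube d) : ℝ≥0∞ :=
  ∑' (I : ↥(dsub 𝒟 K)) (ε : Sig d),
    ENNReal.ofReal (mnorm (VW I.1 * A I.1 ε.1 * (VU K)⁻¹) ^ 2)

/-- The condition `𝔅(W,U,A,p) < ∞` of the Carleson embedding theorem. -/
def BoutCond {d n : ℕ} (𝒟 : Set (Cube d)) (VW VU : Cube d → Matrix (Fin n) (Fin n) ℂ)
    (A : Cube d → (Fin d → Bool) → Matrix (Fin n) (Fin n) ℂ) : Prop :=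
  ∃ C : ℝ, ∀ K ∈ 𝒟, boutSum 𝒟 VW VU A K ≤ ENNReal.ofReal (C * K.vol)

/-- The generic paraproduct-type operator
`Π f = Σ_{ε} Σ_{I∈𝒟} V_I A_I^ε m_I(G f) h_I^ε`. -/
noncomputable def PiOp {d n : ℕ} (𝒟 : Set (Cube d)) (V : Cube d → Matrix (Fin n) (Fin n) ℂ)
    (A : Cube d → (Fin d → Bool) → Matrix (Fin n) (Fin n) ℂ)
    (G : (Fin d → ℝ) → Matrix (Fin n) (Fin n) ℂ) (f : (Fin d → ℝ) → Fin n → ℂ) :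
    (Fin d → ℝ) → Fin n → ℂ :=
  fun x => ∑' (I : ↥𝒟) (ε : Sig d),
    (haar I.1 ε.1 x : ℂ) • ((V I.1 * A I.1 ε.1).mulVec (avgV I.1 fun t => (G t).mulVec (f t)))

/-- The dyadic paraproduct `π_B f = Σ_{ε} Σ_{I∈𝒟} B_I^ε (m_I f) h_I^ε`. -/
noncomputable def para {d n : ℕ} (𝒟 : Set (Cube d))
    (B : (Fin d → ℝ) → Matrix (Fin n) (Fin n) ℂ) (f : (Fin d → ℝ) → Fin n → ℂ) :
    (Fin d → ℝ) → Fin n → ℂ :=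
  fun x => ∑' (I : ↥𝒟) (ε : Sig d),
    (haar I.1 ε.1 x : ℂ) • ((mHaarCoef B I.1 ε.1).mulVec (avgV I.1 f))

/-- The adjoint of the paraproduct `π_{B^*}`, namely
`(π_{B^*})^* f = Σ_{ε} Σ_{I∈𝒟} B_I^ε f_I^ε χ_I/|I|`. -/
noncomputable def paraAdj {d n : ℕ} (𝒟 : Set (Cube d))
    (B : (Fin d → ℝ) → Matrix (Fin n) (Fin n) ℂ) (f : (Fin d → ℝ) → Fin n → ℂ) :
    (Fin d → ℝ) → Fin n → ℂ :=
  fun x => ∑' (I : ↥𝒟) (ε : Sig d),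
    (Set.indicator I.1.carrier (fun _ => (I.1.vol)⁻¹) x : ℝ) •
      ((mHaarCoef B I.1 ε.1).mulVec (vHaarCoef f I.1 ε.1))

/-- The Haar multiplier `T_A f = Σ_{I,ε} A_I^ε f_I^ε h_I^ε`. -/
noncomputable def haarMult {d n : ℕ} (𝒟 : Set (Cube d))
    (A : Cube d → (Fin d → Bool) → Matrix (Fin n) (Fin n) ℂ)
    (f : (Fin d → ℝ) → Fin n → ℂ) : (Fin d → ℝ) → Fin n → ℂ :=
  fun x => ∑' (I : ↥𝒟) (ε : Sig d),
    (haar I.1 ε.1 x : ℂ) • ((A I.1 ε.1).mulVec (vHaarCoef f I.1 ε.1))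

/-- The `H¹_{W,U,𝒟}` norm: `‖S_{W^{-1},𝒟}(M_U Φ)‖_{L¹}`, where
`(M_U Φ)_I^ε = Φ_I^ε (m_I U)^{1/2}`. -/
noncomputable def H1normD {d n : ℕ} (𝒟 : Set (Cube d))
    (W U Φ : (Fin d → ℝ) → Matrix (Fin n) (Fin n) ℂ) : ℝ≥0∞ :=
  ∫⁻ x,
    (∑' (I : ↥𝒟) (ε : Sig d),
      ENNReal.ofReal
        (Set.indicator I.1.carrier
          (fun _ =>
            mnorm (mpow (W x) (-(1 / 2 : ℝ)) * mHaarCoef Φ I.1 ε.1 *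
              mpow (avgM I.1 U) (1 / 2)) ^ 2 / I.1.vol) x)) ^ ((1 : ℝ) / 2)

/-- The `L²` pairing `⟨Φ, B⟩ = ∫ tr (Φ(x) B(x)^*) dx`. -/
noncomputable def pairing {d n : ℕ} (Φ B : (Fin d → ℝ) → Matrix (Fin n) (Fin n) ℂ) : ℂ :=
  ∫ x, Matrix.trace (Φ x * (B x)ᴴ)

/-- The `BMO~_{W,U,𝒟}` (two matrix weighted, `p = 2`) square sum over `J`. -/
noncomputable def bmo2sum {d n : ℕ} (𝒟 : Set (Cube d))
    (W U B : (Fin d → ℝ) → Matrix (Fin n) (Fin n) ℂ) (J : Cube d) : ℝ≥0∞ :=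
  ∑' (I : ↥(dsub 𝒟 J)) (ε : Sig d),
    ENNReal.ofReal
      (mnorm (mpow (avgM I.1 W) (1 / 2) * mHaarCoef B I.1 ε.1 *
        mpow (avgM I.1 U) (-(1 / 2 : ℝ))) ^ 2)

/-- The standard shifted dyadic grids `𝒟^t = {2^{-k}([0,1)^d + m + (-1)^k t)}`. -/
def stdGrid (d : ℕ) (t : ℝ) : Set (Cube d) :=
  {I | ∃ k : ℤ, ∃ m : Fin d → ℤ, I.side = (2 : ℝ) ^ (-k) ∧
    ∀ i, I.corner i = (2 : ℝ) ^ (-k) * ((m i : ℝ) + (-1 : ℝ) ^ k * t)}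

/-- A scalar `A_p` weight with characteristic bounded by `C`. -/
def IsScalarAp {d : ℕ} (p : ℝ) (w : (Fin d → ℝ) → ℝ) (C : ℝ) : Prop :=
  Measurable w ∧ (∀ᵐ x : Fin d → ℝ, 0 < w x) ∧ LocallyIntegrable w volume ∧
    LocallyIntegrable (fun x => w x ^ (1 - conjExp p)) volume ∧
    ∀ I : Cube d, savg I w * (savg I fun x => w x ^ (1 - conjExp p)) ^ (p - 1) ≤ C

end MW

/-! On a cube, normalised Lebesgue measure is a probability measure, so everything reduces to
averages `⟨·⟩` over a probability space. Hölder gives `⟨(u/w)^{1/p}⟩ ≤ ⟨u⟩^{1/p} ⟨w^{1-p'}⟩^{1/p'}`.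
Conversely `1 ≤ ⟨f⟩ ⟨f⁻¹⟩` for `f = (u/w)^{1/p}`, together with Hölder for `⟨(w/u)^{1/p}⟩`,
bounds that product by `([u]_{A_p} [w]_{A_p})^{1/p} ⟨(u/w)^{1/p}⟩`. The other two quantities are
squeezed between the same bounds by Jensen, `⟨w^{1/p}⟩ ≤ ⟨w⟩^{1/p}`, and the power mean
inequality `1 ≤ ⟨w^{1/p}⟩ ⟨w^{1-p'}⟩^{1/p'}`. The BMO characterisation is the comparability
`m_I ν ≈ m_I u^{1/p} / m_I w^{1/p}`, applied cube by cube. -/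

namespace MW

open ProbabilityTheory

section Holder

variable {α : Type*} [MeasurableSpace α] {μ : Measure α} {f g : α → ℝ} {a b s t : ℝ}

lemma integrable_rpow_mul_rpow (hst : s.HolderConjugate t) (hf : AEMeasurable f μ)
    (hg : AEMeasurable g μ) (hf0 : 0 ≤ᵐ[μ] f) (hg0 : 0 ≤ᵐ[μ] g)
    (hfi : Integrable (fun x => f x ^ (a * s)) μ) (hgi : Integrable (fun x => g x ^ (b * t)) μ) :
    Integrable (fun x => f x ^ a * g x ^ b) μ := by
  refine ((hfi.div_const s).add (hgi.div_const t)).mono'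
    ((hf.pow_const a).mul (hg.pow_const b)).aestronglyMeasurable ?_
  filter_upwards [hf0, hg0] with x (hfx : 0 ≤ f x) (hgx : 0 ≤ g x)
  rw [Pi.add_apply, Real.norm_of_nonneg (by positivity), Real.rpow_mul hfx, Real.rpow_mul hgx]
  exact Real.young_inequality_of_nonneg (by positivity) (by positivity) hst

lemma memLp_rpow_of_integrable (hs : 0 < s) (hf : AEMeasurable f μ) (hf0 : 0 ≤ᵐ[μ] f)
    (hfi : Integrable (fun x => f x ^ (a * s)) μ) :
    MemLp (fun x => f x ^ a) (ENNReal.ofReal s) μ := by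
  refine (integrable_norm_rpow_iff (hf.pow_const a).aestronglyMeasurable (by simpa using hs)
    ENNReal.ofReal_ne_top).1 (hfi.congr ?_)
  filter_upwards [hf0] with x hx
  rw [ENNReal.toReal_ofReal hs.le, Real.norm_of_nonneg (Real.rpow_nonneg hx a), Real.rpow_mul hx]

lemma integral_rpow_mul_rpow_le (hst : s.HolderConjugate t) (hf : AEMeasurable f μ)
    (hg : AEMeasurable g μ) (hf0 : 0 ≤ᵐ[μ] f) (hg0 : 0 ≤ᵐ[μ] g)
    (hfi : Integrable (fun x => f x ^ (a * s)) μ) (hgi : Integrable (fun x => g x ^ (b * t)) μ) :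
    ∫ x, f x ^ a * g x ^ b ∂μ ≤
      (∫ x, f x ^ (a * s) ∂μ) ^ (1 / s) * (∫ x, g x ^ (b * t) ∂μ) ^ (1 / t) := by
  have hfs : ∫ x, f x ^ (a * s) ∂μ = ∫ x, (f x ^ a) ^ s ∂μ :=
    integral_congr_ae (hf0.mono fun x hx => Real.rpow_mul hx a s)
  have hgt : ∫ x, g x ^ (b * t) ∂μ = ∫ x, (g x ^ b) ^ t ∂μ :=
    integral_congr_ae (hg0.mono fun x hx => Real.rpow_mul hx b t)
  rw [hfs, hgt]
  exact integral_mul_le_Lp_mul_Lq_of_nonneg hst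
    (hf0.mono fun x hx => Real.rpow_nonneg hx a) (hg0.mono fun x hx => Real.rpow_nonneg hx b)
    (memLp_rpow_of_integrable hst.pos hf hf0 hfi)
    (memLp_rpow_of_integrable hst.symm.pos hg hg0 hgi)

variable [IsProbabilityMeasure μ]

lemma integral_pos_of_ae_pos (hf0 : ∀ᵐ x ∂μ, 0 < f x) (hfi : Integrable f μ) :
    0 < ∫ x, f x ∂μ := by
  refine (integral_pos_iff_support_of_nonneg_ae (hf0.mono fun _ hx => hx.le) hfi).2 ?_
  rw [pos_iff_ne_zero]
  intro h
  obtain ⟨x, hx, hx'⟩ := (hf0.and (measure_eq_zero_iff_ae_notMem.1 h)).exists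
  exact hx' hx.ne'

lemma one_le_integral_mul_integral_rpow_neg_rpow {β : ℝ} (hβ : 0 < β) (hf : AEMeasurable f μ)
    (hf0 : ∀ᵐ x ∂μ, 0 < f x) (hfi : Integrable f μ)
    (hfi' : Integrable (fun x => f x ^ (-β)) μ) :
    1 ≤ (∫ x, f x ∂μ) * (∫ x, f x ^ (-β) ∂μ) ^ (1 / β) := by
  -- Hölder for `1 = f ^ θ * f ^ (-θ)` with `θ = β / (1 + β)`, then raise to the power `1 / θ`
  have hst : Real.HolderConjugate ((1 + β) / β) (1 + β) := by
    rw [Real.holderConjugate_iff]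
    refine ⟨by rw [lt_div_iff₀ hβ]; linarith, ?_⟩
    field_simp
    ring
  have hs : β / (1 + β) * ((1 + β) / β) = 1 := by field_simp
  have ht : -(β / (1 + β)) * (1 + β) = -β := by field_simp
  have hf0' : 0 ≤ᵐ[μ] f := hf0.mono fun _ hx => hx.le
  have h := integral_rpow_mul_rpow_le hst hf hf hf0' hf0' (a := β / (1 + β))
    (b := -(β / (1 + β))) (by simpa only [hs, Real.rpow_one] using hfi)
    (by simpa only [ht] using hfi')
  have hone : ∫ x, f x ^ (β / (1 + β)) * f x ^ (-(β / (1 + β))) ∂μ = 1 := by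
    rw [integral_congr_ae (g := fun _ => (1 : ℝ))
      (hf0.mono fun x hx => by rw [← Real.rpow_add hx, add_neg_cancel, Real.rpow_zero])]
    simp
  simp only [hone, hs, ht, Real.rpow_one] at h
  have hX : 0 ≤ ∫ x, f x ∂μ := integral_nonneg_of_ae hf0'
  have hY : 0 ≤ ∫ x, f x ^ (-β) ∂μ :=
    integral_nonneg_of_ae (hf0.mono fun x hx => Real.rpow_nonneg hx.le _)
  have h2 := Real.rpow_le_rpow zero_le_one h (le_of_lt (by positivity : 0 < (1 + β) / β))
  rwa [Real.one_rpow, Real.mul_rpow (by positivity) (by positivity), ← Real.rpow_mul hX,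
    ← Real.rpow_mul hY, one_div_mul_cancel hst.ne_zero, Real.rpow_one,
    show 1 / (1 + β) * ((1 + β) / β) = 1 / β by field_simp] at h2

end Holder

section Weights

variable {α : Type*} [MeasurableSpace α] {μ : Measure α} {p : ℝ} {u w : α → ℝ}

lemma holderConjugate_conjExp (hp : 1 < p) : p.HolderConjugate (conjExp p) :=
  (Real.holderConjugate_iff_eq_conjExponent hp).2 rfl

lemma one_sub_conjExp (hp : 1 < p) : 1 - conjExp p = -(1 / p) * conjExp p := by
  have : p - 1 ≠ 0 := by linarith
  unfold conjExp
  field_simp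
  ring

lemma rpow_inv_mul_rpow_le_of_mul_rpow_le {X Y K : ℝ} (hp : 1 < p) (hX : 0 ≤ X) (hY : 0 ≤ Y)
    (h : X * Y ^ (p - 1) ≤ K) : X ^ (1 / p) * Y ^ (1 / conjExp p) ≤ K ^ (1 / p) := by
  have hY' : Y ^ (1 / conjExp p) = (Y ^ (p - 1)) ^ (1 / p) := by
    rw [← Real.rpow_mul hY]
    congr 1
    have : p - 1 ≠ 0 := by linarith
    unfold conjExp
    field_simp
  rw [hY', ← Real.mul_rpow hX (by positivity)]
  exact Real.rpow_le_rpow (by positivity) h (one_div_pos.2 (by linarith)).le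

structure IsIntegrableWeight (μ : Measure α) (p : ℝ) (w : α → ℝ) : Prop where
  aemeasurable : AEMeasurable w μ
  pos : ∀ᵐ x ∂μ, 0 < w x
  integrable : Integrable w μ
  integrable_dual : Integrable (fun x => w x ^ (1 - conjExp p)) μ

namespace IsIntegrableWeight

lemma nonneg (hw : IsIntegrableWeight μ p w) : 0 ≤ᵐ[μ] w := hw.pos.mono fun _ hx => hx.le

lemma rpow_div_ae_eq (hu : IsIntegrableWeight μ p u) (hw : IsIntegrableWeight μ p w) :
    (fun x => (u x / w x) ^ (1 / p)) =ᵐ[μ] fun x => u x ^ (1 / p) * w x ^ (-(1 / p)) := by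
  filter_upwards [hu.pos, hw.pos] with x hux hwx
  rw [Real.div_rpow hux.le hwx.le, Real.rpow_neg hwx.le, div_eq_mul_inv]

lemma integrable_rpow_div (hu : IsIntegrableWeight μ p u) (hw : IsIntegrableWeight μ p w)
    (hp : 1 < p) : Integrable (fun x => (u x / w x) ^ (1 / p)) μ := by
  have hpq := holderConjugate_conjExp hp
  refine (integrable_rpow_mul_rpow hpq hu.aemeasurable hw.aemeasurable hu.nonneg hw.nonneg
    (a := 1 / p) (b := -(1 / p)) ?_ ?_).congr (hu.rpow_div_ae_eq hw).symm
  · simpa only [one_div_mul_cancel hpq.ne_zero, Real.rpow_one] using hu.integrable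
  · simpa only [← one_sub_conjExp hp] using hw.integrable_dual

lemma integral_rpow_div_le (hu : IsIntegrableWeight μ p u) (hw : IsIntegrableWeight μ p w)
    (hp : 1 < p) :
    ∫ x, (u x / w x) ^ (1 / p) ∂μ ≤
      (∫ x, u x ∂μ) ^ (1 / p) * (∫ x, w x ^ (1 - conjExp p) ∂μ) ^ (1 / conjExp p) := by
  have hpq := holderConjugate_conjExp hp
  have hus : (1 / p) * p = 1 := one_div_mul_cancel hpq.ne_zero
  have hwt : -(1 / p) * conjExp p = 1 - conjExp p := (one_sub_conjExp hp).symm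
  rw [integral_congr_ae (hu.rpow_div_ae_eq hw)]
  simpa only [hus, hwt, Real.rpow_one] using
    integral_rpow_mul_rpow_le hpq hu.aemeasurable hw.aemeasurable hu.nonneg hw.nonneg
      (a := 1 / p) (b := -(1 / p)) (by simpa only [hus, Real.rpow_one] using hu.integrable)
      (by simpa only [hwt] using hw.integrable_dual)

lemma integrable_rpow_inv [IsFiniteMeasure μ] (hw : IsIntegrableWeight μ p w) (hp : 1 < p) :
    Integrable (fun x => w x ^ (1 / p)) μ := by
  have hp0 : 0 < p := by linarith
  refine (integrable_norm_rpow_of_le hw.aemeasurable.aestronglyMeasurable (by positivity)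
    zero_le_one ((div_le_one hp0).2 hp.le) (by simpa using hw.integrable.norm)).congr ?_
  filter_upwards [hw.nonneg] with x (hx : 0 ≤ w x)
  rw [Real.norm_of_nonneg hx]

variable [IsProbabilityMeasure μ]

lemma integral_pos (hw : IsIntegrableWeight μ p w) : 0 < ∫ x, w x ∂μ :=
  integral_pos_of_ae_pos hw.pos hw.integrable

lemma integral_rpow_inv_pos (hw : IsIntegrableWeight μ p w) (hp : 1 < p) :
    0 < ∫ x, w x ^ (1 / p) ∂μ :=
  integral_pos_of_ae_pos (hw.pos.mono fun _ hx => Real.rpow_pos_of_pos hx _)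
    (hw.integrable_rpow_inv hp)

lemma integral_dual_pos (hw : IsIntegrableWeight μ p w) : 0 < ∫ x, w x ^ (1 - conjExp p) ∂μ :=
  integral_pos_of_ae_pos (hw.pos.mono fun _ hx => Real.rpow_pos_of_pos hx _) hw.integrable_dual

lemma pos_of_ap_le {K : ℝ} (hw : IsIntegrableWeight μ p w)
    (hK : (∫ x, w x ∂μ) * (∫ x, w x ^ (1 - conjExp p) ∂μ) ^ (p - 1) ≤ K) : 0 < K :=
  (mul_pos hw.integral_pos (Real.rpow_pos_of_pos hw.integral_dual_pos _)).trans_le hK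

lemma integral_rpow_inv_le (hw : IsIntegrableWeight μ p w) (hp : 1 < p) :
    ∫ x, w x ^ (1 / p) ∂μ ≤ (∫ x, w x ∂μ) ^ (1 / p) := by
  have hr : 0 ≤ 1 / p := by positivity
  exact (Real.concaveOn_rpow hr ((div_le_one (by linarith)).2 hp.le)).le_map_integral
    (Real.continuous_rpow_const hr).continuousOn isClosed_Ici hw.nonneg hw.integrable
    (hw.integrable_rpow_inv hp)

lemma one_le_integral_rpow_inv_mul (hw : IsIntegrableWeight μ p w) (hp : 1 < p) :
    1 ≤ (∫ x, w x ^ (1 / p) ∂μ) * (∫ x, w x ^ (1 - conjExp p) ∂μ) ^ (1 / conjExp p) := by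
  have hdual : (fun x => (w x ^ (1 / p)) ^ (-conjExp p)) =ᵐ[μ] fun x => w x ^ (1 - conjExp p) := by
    filter_upwards [hw.nonneg] with x (hx : 0 ≤ w x)
    rw [← Real.rpow_mul hx, one_sub_conjExp hp, mul_neg, neg_mul]
  rw [← integral_congr_ae hdual]
  exact one_le_integral_mul_integral_rpow_neg_rpow (holderConjugate_conjExp hp).symm.pos
    (hw.aemeasurable.pow_const _) (hw.pos.mono fun _ hx => Real.rpow_pos_of_pos hx _)
    (hw.integrable_rpow_inv hp) (hw.integrable_dual.congr hdual.symm)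

lemma one_le_integral_rpow_div_mul (hu : IsIntegrableWeight μ p u)
    (hw : IsIntegrableWeight μ p w) (hp : 1 < p) :
    1 ≤ (∫ x, (u x / w x) ^ (1 / p) ∂μ) * ∫ x, (w x / u x) ^ (1 / p) ∂μ := by
  have hinv : (fun x => ((u x / w x) ^ (1 / p)) ^ (-1 : ℝ)) =ᵐ[μ]
      fun x => (w x / u x) ^ (1 / p) := by
    filter_upwards [hu.nonneg, hw.nonneg] with x (hux : 0 ≤ u x) (hwx : 0 ≤ w x)
    rw [Real.rpow_neg_one, ← Real.inv_rpow (by positivity), inv_div]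
  simpa only [integral_congr_ae hinv, div_one, Real.rpow_one] using
    one_le_integral_mul_integral_rpow_neg_rpow (f := fun x => (u x / w x) ^ (1 / p)) one_pos
      ((hu.aemeasurable.div hw.aemeasurable).pow_const _)
      (by filter_upwards [hu.pos, hw.pos] with x hux hwx
          exact Real.rpow_pos_of_pos (div_pos hux hwx) _)
      (hu.integrable_rpow_div hw hp) ((hw.integrable_rpow_div hu hp).congr hinv.symm)

end IsIntegrableWeight

/-- `y ≈ x`, with the constants made explicit. -/
def Comparable (c C x y : ℝ) : Prop := c * x ≤ y ∧ y ≤ C * x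

lemma comparable_of_le {x X y K C : ℝ} (hK : 0 < K) (hxX : x ≤ X) (hXy : X ≤ K * y)
    (hyX : y ≤ X) (hXx : X ≤ C * x) : Comparable K⁻¹ C x y :=
  ⟨(inv_mul_le_iff₀ hK).2 (hxX.trans hXy), hyX.trans hXx⟩

lemma Comparable.mul_left {c C x y v : ℝ} (h : Comparable c C x y) (hv : 0 ≤ v) :
    Comparable c C (v * x) (v * y) :=
  ⟨by rw [mul_left_comm]; exact mul_le_mul_of_nonneg_left h.1 hv,
    by rw [mul_left_comm]; exact mul_le_mul_of_nonneg_left h.2 hv⟩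

section Comparison

variable [IsProbabilityMeasure μ] {Ku Kw : ℝ}

lemma ap_mul_ap_le (hp : 1 < p) (hu : IsIntegrableWeight μ p u) (hw : IsIntegrableWeight μ p w)
    (huA : (∫ x, u x ∂μ) * (∫ x, u x ^ (1 - conjExp p) ∂μ) ^ (p - 1) ≤ Ku)
    (hwA : (∫ x, w x ∂μ) * (∫ x, w x ^ (1 - conjExp p) ∂μ) ^ (p - 1) ≤ Kw) :
    (∫ x, u x ∂μ) ^ (1 / p) * (∫ x, u x ^ (1 - conjExp p) ∂μ) ^ (1 / conjExp p) *
        ((∫ x, w x ∂μ) ^ (1 / p) * (∫ x, w x ^ (1 - conjExp p) ∂μ) ^ (1 / conjExp p)) ≤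
      (Ku * Kw) ^ (1 / p) := by
  have hKu := (hu.pos_of_ap_le huA).le
  have hKw := (hw.pos_of_ap_le hwA).le
  rw [Real.mul_rpow hKu hKw]
  exact mul_le_mul
    (rpow_inv_mul_rpow_le_of_mul_rpow_le hp hu.integral_pos.le hu.integral_dual_pos.le huA)
    (rpow_inv_mul_rpow_le_of_mul_rpow_le hp hw.integral_pos.le hw.integral_dual_pos.le hwA)
    (mul_nonneg (Real.rpow_nonneg hw.integral_pos.le _)
      (Real.rpow_nonneg hw.integral_dual_pos.le _)) (Real.rpow_nonneg hKu _)

lemma le_mul_integral_rpow_div (hp : 1 < p) (hu : IsIntegrableWeight μ p u)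
    (hw : IsIntegrableWeight μ p w)
    (huA : (∫ x, u x ∂μ) * (∫ x, u x ^ (1 - conjExp p) ∂μ) ^ (p - 1) ≤ Ku)
    (hwA : (∫ x, w x ∂μ) * (∫ x, w x ^ (1 - conjExp p) ∂μ) ^ (p - 1) ≤ Kw) :
    (∫ x, u x ∂μ) ^ (1 / p) * (∫ x, w x ^ (1 - conjExp p) ∂μ) ^ (1 / conjExp p) ≤
      (Ku * Kw) ^ (1 / p) * ∫ x, (u x / w x) ^ (1 / p) ∂μ := by
  set X := (∫ x, u x ∂μ) ^ (1 / p) * (∫ x, w x ^ (1 - conjExp p) ∂μ) ^ (1 / conjExp p)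
  set ν := ∫ x, (u x / w x) ^ (1 / p) ∂μ
  have hX : 0 ≤ X := mul_nonneg (Real.rpow_nonneg hu.integral_pos.le _)
    (Real.rpow_nonneg hw.integral_dual_pos.le _)
  have hν : 0 ≤ ν := integral_nonneg_of_ae <| by
    filter_upwards [hu.nonneg, hw.nonneg] with x (hux : 0 ≤ u x) (hwx : 0 ≤ w x)
    exact Real.rpow_nonneg (div_nonneg hux hwx) _
  -- `1 ≤ ν ⟨(w/u)^{1/p}⟩` and Hölder for the second factor supply the missing halves of the
  -- two `A_p` products
  calc X ≤ X * (ν * ∫ x, (w x / u x) ^ (1 / p) ∂μ) :=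
        le_mul_of_one_le_right hX (hu.one_le_integral_rpow_div_mul hw hp)
    _ ≤ X * (ν * ((∫ x, w x ∂μ) ^ (1 / p) *
          (∫ x, u x ^ (1 - conjExp p) ∂μ) ^ (1 / conjExp p))) :=
        mul_le_mul_of_nonneg_left
          (mul_le_mul_of_nonneg_left (hw.integral_rpow_div_le hu hp) hν) hX
    _ = ν * ((∫ x, u x ∂μ) ^ (1 / p) * (∫ x, u x ^ (1 - conjExp p) ∂μ) ^ (1 / conjExp p) *
          ((∫ x, w x ∂μ) ^ (1 / p) * (∫ x, w x ^ (1 - conjExp p) ∂μ) ^ (1 / conjExp p))) := by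
        ring
    _ ≤ ν * (Ku * Kw) ^ (1 / p) := mul_le_mul_of_nonneg_left (ap_mul_ap_le hp hu hw huA hwA) hν
    _ = (Ku * Kw) ^ (1 / p) * ν := mul_comm _ _

lemma le_mul_integral_rpow_inv_div (hp : 1 < p) (hu : IsIntegrableWeight μ p u)
    (hw : IsIntegrableWeight μ p w)
    (huA : (∫ x, u x ∂μ) * (∫ x, u x ^ (1 - conjExp p) ∂μ) ^ (p - 1) ≤ Ku)
    (hwA : (∫ x, w x ∂μ) * (∫ x, w x ^ (1 - conjExp p) ∂μ) ^ (p - 1) ≤ Kw) :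
    (∫ x, u x ∂μ) ^ (1 / p) * (∫ x, w x ^ (1 - conjExp p) ∂μ) ^ (1 / conjExp p) ≤
      (Ku * Kw) ^ (1 / p) * ((∫ x, u x ^ (1 / p) ∂μ) * (∫ x, w x ^ (1 / p) ∂μ)⁻¹) := by
  set X := (∫ x, u x ∂μ) ^ (1 / p) * (∫ x, w x ^ (1 - conjExp p) ∂μ) ^ (1 / conjExp p)
  set P := ∫ x, u x ^ (1 / p) ∂μ
  have hX : 0 ≤ X := mul_nonneg (Real.rpow_nonneg hu.integral_pos.le _)
    (Real.rpow_nonneg hw.integral_dual_pos.le _)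
  rw [← mul_assoc, le_mul_inv_iff₀ (hw.integral_rpow_inv_pos hp)]
  calc X * ∫ x, w x ^ (1 / p) ∂μ ≤ X * (∫ x, w x ∂μ) ^ (1 / p) :=
        mul_le_mul_of_nonneg_left (hw.integral_rpow_inv_le hp) hX
    _ ≤ X * (∫ x, w x ∂μ) ^ (1 / p) *
          (P * (∫ x, u x ^ (1 - conjExp p) ∂μ) ^ (1 / conjExp p)) :=
        le_mul_of_one_le_right (mul_nonneg hX (Real.rpow_nonneg hw.integral_pos.le _))
          (hu.one_le_integral_rpow_inv_mul hp)
    _ = P * ((∫ x, u x ∂μ) ^ (1 / p) * (∫ x, u x ^ (1 - conjExp p) ∂μ) ^ (1 / conjExp p) *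
          ((∫ x, w x ∂μ) ^ (1 / p) * (∫ x, w x ^ (1 - conjExp p) ∂μ) ^ (1 / conjExp p))) := by
        ring
    _ ≤ P * (Ku * Kw) ^ (1 / p) :=
        mul_le_mul_of_nonneg_left (ap_mul_ap_le hp hu hw huA hwA) (hu.integral_rpow_inv_pos hp).le
    _ = (Ku * Kw) ^ (1 / p) * P := mul_comm _ _

theorem comparable_integral_rpow_div (hp : 1 < p) (hu : IsIntegrableWeight μ p u)
    (hw : IsIntegrableWeight μ p w)
    (huA : (∫ x, u x ∂μ) * (∫ x, u x ^ (1 - conjExp p) ∂μ) ^ (p - 1) ≤ Ku)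
    (hwA : (∫ x, w x ∂μ) * (∫ x, w x ^ (1 - conjExp p) ∂μ) ^ (p - 1) ≤ Kw) :
    Comparable ((Ku * Kw) ^ (1 / p))⁻¹ 1
        ((∫ x, u x ∂μ) ^ (1 / p) * (∫ x, w x ^ (1 - conjExp p) ∂μ) ^ (1 / conjExp p))
        (∫ x, (u x / w x) ^ (1 / p) ∂μ) ∧
      Comparable ((Ku * Kw) ^ (1 / p))⁻¹ (Kw ^ (1 / p))
        ((∫ x, u x ∂μ) ^ (1 / p) * (∫ x, w x ∂μ) ^ (-(1 / p)))
        (∫ x, (u x / w x) ^ (1 / p) ∂μ) ∧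
      Comparable ((Ku * Kw) ^ (1 / p))⁻¹ ((Ku * Kw) ^ (1 / p))
        ((∫ x, u x ^ (1 / p) ∂μ) * (∫ x, w x ^ (1 / p) ∂μ)⁻¹)
        (∫ x, (u x / w x) ^ (1 / p) ∂μ) := by
  set A := ∫ x, u x ∂μ
  set W := ∫ x, w x ∂μ
  set S := ∫ x, w x ^ (1 - conjExp p) ∂μ
  set Q := ∫ x, w x ^ (1 / p) ∂μ
  have hK : 0 < (Ku * Kw) ^ (1 / p) :=
    Real.rpow_pos_of_pos (mul_pos (hu.pos_of_ap_le huA) (hw.pos_of_ap_le hwA)) _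
  have hνX := hu.integral_rpow_div_le hw hp
  have hXν := le_mul_integral_rpow_div hp hu hw huA hwA
  have hA : 0 ≤ A ^ (1 / p) := Real.rpow_nonneg hu.integral_pos.le _
  have hS : 0 ≤ S ^ (1 / conjExp p) := Real.rpow_nonneg hw.integral_dual_pos.le _
  have hW : 0 < W ^ (1 / p) := Real.rpow_pos_of_pos hw.integral_pos _
  have hQS : 1 ≤ Q * S ^ (1 / conjExp p) := hw.one_le_integral_rpow_inv_mul hp
  have hWS : 1 ≤ W ^ (1 / p) * S ^ (1 / conjExp p) :=
    hQS.trans (mul_le_mul_of_nonneg_right (hw.integral_rpow_inv_le hp) hS)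
  have hWW : W ^ (-(1 / p)) * W ^ (1 / p) = 1 := by
    rw [← Real.rpow_add hw.integral_pos, neg_add_cancel, Real.rpow_zero]
  refine ⟨comparable_of_le hK le_rfl hXν hνX (one_mul _).ge,
    comparable_of_le hK ?_ hXν hνX ?_,
    comparable_of_le hK ?_ hXν hνX (le_mul_integral_rpow_inv_div hp hu hw huA hwA)⟩
  · refine mul_le_mul_of_nonneg_left ?_ hA
    rwa [Real.rpow_neg hw.integral_pos.le, inv_le_iff_one_le_mul₀' hW]
  · calc A ^ (1 / p) * S ^ (1 / conjExp p)
        = A ^ (1 / p) * W ^ (-(1 / p)) * (W ^ (1 / p) * S ^ (1 / conjExp p)) := by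
          linear_combination (-(A ^ (1 / p) * S ^ (1 / conjExp p))) * hWW
      _ ≤ A ^ (1 / p) * W ^ (-(1 / p)) * Kw ^ (1 / p) :=
          mul_le_mul_of_nonneg_left (rpow_inv_mul_rpow_le_of_mul_rpow_le hp
            hw.integral_pos.le hw.integral_dual_pos.le hwA)
            (mul_nonneg hA (Real.rpow_nonneg hw.integral_pos.le _))
      _ = Kw ^ (1 / p) * (A ^ (1 / p) * W ^ (-(1 / p))) := mul_comm _ _
  · have hQ := hw.integral_rpow_inv_pos hp
    exact mul_le_mul (hu.integral_rpow_inv_le hp) ((inv_le_iff_one_le_mul₀' hQ).2 hQS)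
      (inv_nonneg.2 hQ.le) hA

end Comparison

end Weights

lemma exists_forall_le_ofReal_mul_iff {ι : Type*} {L : ι → ℝ≥0∞} {a b : ι → ℝ} {c C : ℝ}
    (hc : 0 < c) (hab : ∀ i, Comparable c C (b i) (a i)) (hb : ∀ i, 0 ≤ b i) :
    (∃ K, ∀ i, L i ≤ ENNReal.ofReal (K * a i)) ↔ ∃ K, ∀ i, L i ≤ ENNReal.ofReal (K * b i) := by
  have ha (i : ι) : 0 ≤ a i := (mul_nonneg hc.le (hb i)).trans (hab i).1
  constructor
  · rintro ⟨K, hK⟩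
    refine ⟨max K 0 * C, fun i => (hK i).trans (ENNReal.ofReal_le_ofReal ?_)⟩
    calc K * a i ≤ max K 0 * a i := mul_le_mul_of_nonneg_right (le_max_left _ _) (ha i)
      _ ≤ max K 0 * (C * b i) := mul_le_mul_of_nonneg_left (hab i).2 (le_max_right _ _)
      _ = max K 0 * C * b i := (mul_assoc _ _ _).symm
  · rintro ⟨K, hK⟩
    refine ⟨max K 0 * c⁻¹, fun i => (hK i).trans (ENNReal.ofReal_le_ofReal ?_)⟩
    calc K * b i ≤ max K 0 * b i := mul_le_mul_of_nonneg_right (le_max_left _ _) (hb i)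
      _ = max K 0 * c⁻¹ * (c * b i) := by field_simp
      _ ≤ max K 0 * c⁻¹ * a i :=
          mul_le_mul_of_nonneg_left (hab i).1 (mul_nonneg (le_max_right _ _) (inv_pos.2 hc).le)

lemma lintegral_ofReal_mul_le_ofReal_iff {α : Type*} [MeasurableSpace α] {μ : Measure α}
    {f : α → ℝ} {r B : ℝ} (hr : 0 < r) :
    ∫⁻ x, ENNReal.ofReal (r * f x) ∂μ ≤ ENNReal.ofReal B ↔
      ∫⁻ x, ENNReal.ofReal (f x) ∂μ ≤ ENNReal.ofReal (B / r) := by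
  simp_rw [ENNReal.ofReal_mul hr.le]
  rw [lintegral_const_mul' _ _ ENNReal.ofReal_ne_top, ENNReal.ofReal_div_of_pos hr,
    ENNReal.le_div_iff_mul_le (Or.inl (by simpa using hr)) (Or.inl ENNReal.ofReal_ne_top),
    mul_comm]

section Cubes

variable {d : ℕ}

namespace Cube

lemma carrier_eq_pi (I : Cube d) :
    I.carrier = Set.pi Set.univ fun i => Set.Ico (I.corner i) (I.corner i + I.side) := by
  ext x
  simp [carrier, Set.mem_pi]

lemma vol_pos (I : Cube d) : 0 < I.vol := pow_pos I.side_pos d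

lemma volume_carrier (I : Cube d) : volume I.carrier = ENNReal.ofReal I.vol := by
  rw [I.carrier_eq_pi, volume_pi_pi]
  simp [Real.volume_Ico, vol, ← ENNReal.ofReal_pow I.side_pos.le]

instance (I : Cube d) : IsProbabilityMeasure (volume[|I.carrier]) :=
  cond_isProbabilityMeasure_of_finite (by simp [I.volume_carrier, I.vol_pos])
    (by simp [I.volume_carrier])

lemma integrable_cond {f : (Fin d → ℝ) → ℝ} (hf : LocallyIntegrable f volume) (I : Cube d) :
    Integrable f (volume[|I.carrier]) := by
  have hbdd : Bornology.IsBounded I.carrier := by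
    rw [I.carrier_eq_pi]
    exact Bornology.IsBounded.pi fun _ => Metric.isBounded_Ico _ _
  exact ((hf.integrableOn_isCompact hbdd.isCompact_closure).mono_set subset_closure).smul_measure
    (ENNReal.inv_ne_top.2 (by simp [I.volume_carrier, I.vol_pos]))

end Cube

lemma savg_eq_integral_cond (I : Cube d) (g : (Fin d → ℝ) → ℝ) :
    savg I g = ∫ x, g x ∂volume[|I.carrier] := by
  rw [ProbabilityTheory.cond, integral_smul_measure, I.volume_carrier, ENNReal.toReal_inv,
    ENNReal.toReal_ofReal I.vol_pos.le, smul_eq_mul, savg]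

lemma setIntegral_eq_vol_mul_savg (I : Cube d) (g : (Fin d → ℝ) → ℝ) :
    ∫ x in I.carrier, g x = I.vol * savg I g := by
  rw [savg, ← mul_assoc, mul_inv_cancel₀ I.vol_pos.ne', one_mul]

namespace IsScalarAp

variable {p C : ℝ} {w : (Fin d → ℝ) → ℝ}

lemma isIntegrableWeight (hw : IsScalarAp p w C) (I : Cube d) :
    IsIntegrableWeight (volume[|I.carrier]) p w :=
  ⟨hw.1.aemeasurable, cond_absolutelyContinuous.ae_le hw.2.1, Cube.integrable_cond hw.2.2.1 I,
    Cube.integrable_cond hw.2.2.2.1 I⟩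

lemma ap_le {K : ℝ} (hw : IsScalarAp p w C) (hC : C ≤ K) (I : Cube d) :
    (∫ x, w x ∂volume[|I.carrier]) *
      (∫ x, w x ^ (1 - conjExp p) ∂volume[|I.carrier]) ^ (p - 1) ≤ K := by
  simpa only [savg_eq_integral_cond] using (hw.2.2.2.2 I).trans hC

end IsScalarAp

end Cubes

/-- the rewriting of Bloom's BMO condition from the introduction.
If `u, w` are scalar `A_p` weights and `ν = (u w^{-1})^{1/p}`, then `m_I ν` is comparable
(with constants depending only on the `A_p` characteristics, `p` and `d`) to
`(m_I u)^{1/p} (m_I w^{1-p'})^{1/p'}`, to `(m_I u)^{1/p} (m_I w)^{-1/p}` and to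
`(m_I u^{1/p})(m_I w^{1/p})^{-1}`; in particular `b ∈ BMO_ν` iff
`sup_I (1/|I|) ∫_I (m_I w^{1/p})(m_I u^{1/p})^{-1} |b - m_I b| < ∞`. -/
theorem statement17 (d : ℕ) (p : ℝ) (hp : 1 < p) (Cu Cw : ℝ) :
    ∃ c₁ c₂ c₃ c₄ c₅ c₆ : ℝ,
      0 < c₁ ∧ 0 < c₂ ∧ 0 < c₃ ∧ 0 < c₄ ∧ 0 < c₅ ∧ 0 < c₆ ∧
      ∀ u w : (Fin d → ℝ) → ℝ, IsScalarAp p u Cu → IsScalarAp p w Cw →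
        (∀ I : Cube d,
          (c₁ * (savg I u ^ (1 / p) *
              (savg I fun x => w x ^ (1 - conjExp p)) ^ (1 / conjExp p)) ≤
              savg I (fun x => (u x / w x) ^ (1 / p)) ∧
            savg I (fun x => (u x / w x) ^ (1 / p)) ≤
              c₂ * (savg I u ^ (1 / p) *
                (savg I fun x => w x ^ (1 - conjExp p)) ^ (1 / conjExp p))) ∧
          (c₃ * (savg I u ^ (1 / p) * savg I w ^ (-(1 / p))) ≤
              savg I (fun x => (u x / w x) ^ (1 / p)) ∧
            savg I (fun x => (u x / w x) ^ (1 / p)) ≤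
              c₄ * (savg I u ^ (1 / p) * savg I w ^ (-(1 / p)))) ∧
          (c₅ * ((savg I fun x => u x ^ (1 / p)) * (savg I fun x => w x ^ (1 / p))⁻¹) ≤
              savg I (fun x => (u x / w x) ^ (1 / p)) ∧
            savg I (fun x => (u x / w x) ^ (1 / p)) ≤
              c₆ * ((savg I fun x => u x ^ (1 / p)) *
                (savg I fun x => w x ^ (1 / p))⁻¹))) ∧
        ∀ b : (Fin d → ℝ) → ℂ, LocallyIntegrable b volume →
          ((∃ C : ℝ, ∀ I : Cube d,
              (∫⁻ x in I.carrier, ENNReal.ofReal ‖b x - cavg I b‖) ≤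
                ENNReal.ofReal (C * ∫ x in I.carrier, (u x / w x) ^ (1 / p))) ↔
            (∃ C : ℝ, ∀ I : Cube d,
              (∫⁻ x in I.carrier,
                ENNReal.ofReal
                  ((savg I fun x => w x ^ (1 / p)) *
                    (savg I fun x => u x ^ (1 / p))⁻¹ *
                    ‖b x - cavg I b‖)) ≤
                ENNReal.ofReal (C * I.vol))) := by
  have hK : 0 < (max Cu 1 * max Cw 1) ^ (1 / p) := by positivity
  refine ⟨((max Cu 1 * max Cw 1) ^ (1 / p))⁻¹, 1, ((max Cu 1 * max Cw 1) ^ (1 / p))⁻¹,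
    max Cw 1 ^ (1 / p), ((max Cu 1 * max Cw 1) ^ (1 / p))⁻¹, (max Cu 1 * max Cw 1) ^ (1 / p),
    inv_pos.2 hK, one_pos, inv_pos.2 hK, by positivity, inv_pos.2 hK, hK, fun u w hu hw => ?_⟩
  have hcmp (I : Cube d) := comparable_integral_rpow_div hp (hu.isIntegrableWeight I)
    (hw.isIntegrableWeight I) (hu.ap_le (le_max_left _ 1) I) (hw.ap_le (le_max_left _ 1) I)
  simp only [← savg_eq_integral_cond] at hcmp
  refine ⟨hcmp, fun b _ => ?_⟩
  have hPQ (I : Cube d) :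
      0 < (savg I fun x => w x ^ (1 / p)) * (savg I fun x => u x ^ (1 / p))⁻¹ := by
    simp only [savg_eq_integral_cond]
    exact mul_pos ((hw.isIntegrableWeight I).integral_rpow_inv_pos hp)
      (inv_pos.2 ((hu.isIntegrableWeight I).integral_rpow_inv_pos hp))
  simp only [setIntegral_eq_vol_mul_savg, lintegral_ofReal_mul_le_ofReal_iff, hPQ, mul_div_assoc]
  refine exists_forall_le_ofReal_mul_iff (C := (max Cu 1 * max Cw 1) ^ (1 / p)) (inv_pos.2 hK)
    (fun I => ?_)
    (fun I => div_nonneg I.vol_pos.le (hPQ I).le)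
  convert (hcmp I).2.2.mul_left I.vol_pos.le using 2
  rw [div_eq_mul_inv, mul_inv, inv_inv, mul_comm (savg I _)⁻¹]

end MW
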